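/- arXiv:1808.00929 — 3 statements merged into one kernel-verified Lean document; each statement's English description precedes it below -/
import Mathlib

section
/- Fix real constants p > 2, β > 0, Λ > 0 and T, T' > 0. Let X : [0,T] → ℝ × [0,∞) be continuously differentiable and satisfy Condition I, with F₁(X(0)) > 0. Let A_L : [0,T'] → ℝ² be a solution of the initial value problem A_L'(t) = Φ_L(A_L(t)), A_L(0) = X(0). Define τ = inf{t ∈ [0,T] : F₁(X(t)) ≤ 0} (with τ = T if this set is empty) and τᴸ = inf{t ∈ [0,T'] : F₁(A_L(t)) ≤ 0} (with τᴸ = T' if empty). Then: (i) t ↦ X₁(t) is strictly increasing on [0, τ]; and (ii) for every s ∈ [0, τ] and t ∈ [0, τᴸ] with X₁(s) = A_{L,1}(t), one has X₂(s) ≥ A_{L,2}(t). -/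
open Set

/-- `F₁(u,v) = -p·u + β·v`. -/
noncomputable def F1 (p β : ℝ) (z : ℝ × ℝ) : ℝ := -p * z.1 + β * z.2

/-- `F₂ᴸ(u,v) = 2p(p-1) - 2(p-1)v + 2pu(pu - βv) - 2βΛv`. -/
noncomputable def F2L (p β Λ : ℝ) (z : ℝ × ℝ) : ℝ :=
  2 * p * (p - 1) - 2 * (p - 1) * z.2 + 2 * p * z.1 * (p * z.1 - β * z.2) - 2 * β * Λ * z.2

/-- `F₂ᵁ(u,v) = 2p(p-1) - 2(p-1)v + 2pu(pu - βv) + 2βΛv`. -/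
noncomputable def F2U (p β Λ : ℝ) (z : ℝ × ℝ) : ℝ :=
  2 * p * (p - 1) - 2 * (p - 1) * z.2 + 2 * p * z.1 * (p * z.1 - β * z.2) + 2 * β * Λ * z.2

/-- The lower bounding vector field `Φ_L = (F₁, F₂ᴸ)`. -/
noncomputable def PhiL (p β Λ : ℝ) (z : ℝ × ℝ) : ℝ × ℝ := (F1 p β z, F2L p β Λ z)

/-- The upper bounding vector field `Φ_U = (F₁, F₂ᵁ)`. -/
noncomputable def PhiU (p β Λ : ℝ) (z : ℝ × ℝ) : ℝ × ℝ := (F1 p β z, F2U p β Λ z)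

/-- **Condition I**: `U : [0,T] → ℝ²` is `C¹` with derivative `U'` satisfying
`U₁' = F₁(U)` and `F₂ᴸ(U) ≤ U₂' ≤ F₂ᵁ(U)` on `[0,T]`. -/
def CondI (p β Λ T : ℝ) (U U' : ℝ → ℝ × ℝ) : Prop :=
  (∀ t ∈ Icc (0 : ℝ) T, HasDerivWithinAt U (U' t) (Icc (0 : ℝ) T) t) ∧
  ContinuousOn U' (Icc (0 : ℝ) T) ∧
  (∀ t ∈ Icc (0 : ℝ) T, (U' t).1 = F1 p β (U t)) ∧
  (∀ t ∈ Icc (0 : ℝ) T, F2L p β Λ (U t) ≤ (U' t).2 ∧ (U' t).2 ≤ F2U p β Λ (U t))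

/-!
Up to their exit times both curves move to the right, since their first coordinates have
derivative `F₁ > 0`; hence they are graphs `v = g u` (for `X`) and `v = h u` (for `A_L`) over a
common interval of the `u`-axis, starting at the same point. Condition I makes `g` a
supersolution and `A_L` makes `h` a solution of the scalar equation `v' = F₂ᴸ(u,v) / F₁(u,v)`.
On compact pieces of the region `F₁ > 0` this slope is Lipschitz in `v`, so Grönwall's argument
applied to `h - g` gives `h ≤ g`; the right endpoint, where `F₁` may vanish, follows by
continuity.
-/

theorem HasDerivAt.fst {𝕜 E F : Type*} [NontriviallyNormedField 𝕜] [NormedAddCommGroup E]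
    [NormedSpace 𝕜 E] [NormedAddCommGroup F] [NormedSpace 𝕜 F] {f : 𝕜 → E × F} {f' : E × F}
    {x : 𝕜} (h : HasDerivAt f f' x) : HasDerivAt (fun y => (f y).1) f'.1 x :=
  (ContinuousLinearMap.fst 𝕜 E F).hasFDerivAt.comp_hasDerivAt x h

theorem HasDerivAt.snd {𝕜 E F : Type*} [NontriviallyNormedField 𝕜] [NormedAddCommGroup E]
    [NormedSpace 𝕜 E] [NormedAddCommGroup F] [NormedSpace 𝕜 F] {f : 𝕜 → E × F} {f' : E × F}
    {x : 𝕜} (h : HasDerivAt f f' x) : HasDerivAt (fun y => (f y).2) f'.2 x :=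
  (ContinuousLinearMap.snd 𝕜 E F).hasFDerivAt.comp_hasDerivAt x h

theorem StrictMonoOn.exists_continuous_invOn {f : ℝ → ℝ} {a b : ℝ} (hab : a ≤ b)
    (hf : ContinuousOn f (Icc a b)) (hmono : StrictMonoOn f (Icc a b)) :
    ∃ σ : ℝ → ℝ, Continuous σ ∧ MapsTo σ (Icc (f a) (f b)) (Icc a b) ∧
      InvOn σ f (Icc a b) (Icc (f a) (f b)) := by
  have hfab : f a ≤ f b := hmono.monotoneOn ⟨le_rfl, hab⟩ ⟨hab, le_rfl⟩ hab
  let e : Icc a b ≃o Icc (f a) (f b) := (hmono.orderIso f _).trans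
    (OrderIso.setCongr _ _ (hf.image_Icc_of_monotoneOn hab hmono.monotoneOn))
  set σ := IccExtend hfab (Subtype.val ∘ e.symm) with hσ
  have hmaps : MapsTo σ (Icc (f a) (f b)) (Icc a b) := fun u hu => by
    rw [hσ, IccExtend_of_mem _ _ hu]
    exact (e.symm _).2
  have hright : RightInvOn σ f (Icc (f a) (f b)) := fun u hu => by
    rw [hσ, IccExtend_of_mem _ _ hu]
    exact congrArg Subtype.val (e.apply_symm_apply ⟨u, hu⟩)
  refine ⟨σ, continuous_IccExtend_iff.2 (continuous_subtype_val.comp e.symm.continuous), hmaps,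
    fun t ht => ?_, hright⟩
  have hft := hmono.monotoneOn.mapsTo_Icc ht
  exact hmono.injOn (hmaps hft) ht (hright hft)

section Graph

variable {Y Y' : ℝ → ℝ × ℝ} {a b : ℝ}

theorem strictMonoOn_fst_of_hasDerivWithinAt
    (hY : ∀ t ∈ Icc a b, HasDerivWithinAt Y (Y' t) (Icc a b) t)
    (hpos : ∀ t ∈ Ioo a b, 0 < (Y' t).1) : StrictMonoOn (fun t => (Y t).1) (Icc a b) := by
  refine strictMonoOn_of_deriv_pos (convex_Icc a b)
    (continuous_fst.comp_continuousOn fun t ht => (hY t ht).continuousWithinAt) fun t ht => ?_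
  rw [interior_Icc] at ht
  rw [((hY t (Ioo_subset_Icc_self ht)).hasDerivAt (Icc_mem_nhds ht.1 ht.2)).fst.deriv]
  exact hpos t ht

theorem exists_graph_of_hasDerivWithinAt (hab : a ≤ b)
    (hY : ∀ t ∈ Icc a b, HasDerivWithinAt Y (Y' t) (Icc a b) t)
    (hpos : ∀ t ∈ Ioo a b, 0 < (Y' t).1) :
    ∃ g : ℝ → ℝ, ContinuousOn g (Icc (Y a).1 (Y b).1) ∧ (∀ t ∈ Icc a b, g (Y t).1 = (Y t).2) ∧
      ∀ u ∈ Ioo (Y a).1 (Y b).1, ∃ t ∈ Ioo a b, (Y t).1 = u ∧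
        HasDerivAt g ((Y' t).2 / (Y' t).1) u := by
  have hYc : ContinuousOn Y (Icc a b) := fun t ht => (hY t ht).continuousWithinAt
  obtain ⟨σ, hσc, hσmaps, hσinv⟩ := (strictMonoOn_fst_of_hasDerivWithinAt hY hpos)
    |>.exists_continuous_invOn (f := fun t => (Y t).1) hab
      (continuous_fst.comp_continuousOn hYc)
  refine ⟨fun u => (Y (σ u)).2, (continuous_snd.comp_continuousOn hYc).comp hσc.continuousOn
    hσmaps, fun t ht => by simp only [hσinv.1 ht], fun u hu => ?_⟩
  have hu' := Ioo_subset_Icc_self hu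
  have hYσ : (Y (σ u)).1 = u := hσinv.2 hu'
  have hσu : σ u ∈ Ioo a b := by
    obtain ⟨ha, hb⟩ := hσmaps hu'
    refine ⟨ha.lt_of_ne fun h => ?_, hb.lt_of_ne fun h => ?_⟩
    · exact hu.1.ne (h ▸ hYσ)
    · exact hu.2.ne' (h ▸ hYσ)
  have hYd : HasDerivAt Y (Y' (σ u)) (σ u) :=
    (hY _ (Ioo_subset_Icc_self hσu)).hasDerivAt (Icc_mem_nhds hσu.1 hσu.2)
  have hσd : HasDerivAt σ (Y' (σ u)).1⁻¹ u :=
    hYd.fst.of_local_left_inverse hσc.continuousAt (hpos _ hσu).ne' <| by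
      filter_upwards [Ioo_mem_nhds hu.1 hu.2] with v hv using hσinv.2 (Ioo_subset_Icc_self hv)
  exact ⟨σ u, hσu, hYσ, hYd.snd.comp u hσd⟩

end Graph

theorem nonpos_of_hasDerivAt_le_mul {w w' : ℝ → ℝ} {a b K : ℝ}
    (hw : ContinuousOn w (Icc a b)) (hw' : ∀ x ∈ Ioo a b, HasDerivAt w (w' x) x)
    (hbound : ∀ x ∈ Ioo a b, 0 < w x → w' x ≤ K * w x) (ha : w a ≤ 0) :
    ∀ x ∈ Icc a b, w x ≤ 0 := by
  intro x hx
  by_contra! hwx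
  set S := Icc a x ∩ w ⁻¹' Iic 0
  have hSb : BddAbove S := bddAbove_Icc.mono inter_subset_left
  have hz : sSup S ∈ S :=
    ((hw.mono (Icc_subset_Icc_right hx.2)).preimage_isClosed_of_isClosed isClosed_Icc
      isClosed_Iic).csSup_mem ⟨a, left_mem_Icc.2 hx.1, ha⟩ hSb
  set z := sSup S
  have hzx : z < x := hz.1.2.lt_of_ne fun h => (h ▸ hwx).not_ge hz.2
  have hpos : ∀ y ∈ Ioo z x, 0 < w y := fun y hy => by
    by_contra! hy₀
    exact hy.1.not_ge (le_csSup hSb ⟨⟨hz.1.1.trans hy.1.le, hy.2.le⟩, hy₀⟩)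
  have hsub : Icc z x ⊆ Icc a b := Icc_subset_Icc hz.1.1 hx.2
  have hint : interior (Icc z x) ⊆ Ioo a b := by
    rw [interior_Icc]
    exact Ioo_subset_Ioo hz.1.1 hx.2
  -- `z` is the last zero of `w` before `x`; on `[z, x]` the function `w · exp (-K ·)` is
  -- antitone, yet it is `≤ 0` at `z` and `> 0` at `x`.
  have hanti : AntitoneOn (fun y => w y * Real.exp (-K * y)) (Icc z x) := by
    refine antitoneOn_of_hasDerivWithinAt_nonpos
      (f' := fun y => w' y * Real.exp (-K * y) + w y * (Real.exp (-K * y) * -K))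
      (convex_Icc z x) ((hw.mono hsub).mul (by fun_prop)) (fun y hy => ?_) fun y hy => ?_
    · exact ((hw' y (hint hy)).mul (((hasDerivAt_id y).const_mul (-K)).exp.congr_deriv
        (by simp))).hasDerivWithinAt
    · have hwy : 0 < w y := hpos y (by rwa [interior_Icc] at hy)
      nlinarith [hbound y (hint hy) hwy, Real.exp_pos (-K * y)]
  exact (hanti ⟨le_rfl, hzx.le⟩ ⟨hzx.le, le_rfl⟩ hzx.le).not_gt
    ((mul_nonpos_of_nonpos_of_nonneg hz.2 (Real.exp_pos _).le).trans_lt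
      (mul_pos hwx (Real.exp_pos _)))

/-- The paper's `τ`; the point `T` is added so that `sInf` is `T`, not `0`, when `f` stays
positive on `[0,T]`. -/
noncomputable def exitTime (f : ℝ → ℝ) (T : ℝ) : ℝ := sInf ({t ∈ Icc 0 T | f t ≤ 0} ∪ {T})

theorem bddBelow_exitTime_set (f : ℝ → ℝ) (T : ℝ) : BddBelow ({t ∈ Icc 0 T | f t ≤ 0} ∪ {T}) :=
  (bddBelow_Icc.mono (sep_subset _ _)).union bddBelow_singleton

theorem exitTime_le (f : ℝ → ℝ) (T : ℝ) : exitTime f T ≤ T :=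
  csInf_le (bddBelow_exitTime_set f T) (Or.inr rfl)

theorem pos_of_lt_exitTime {f : ℝ → ℝ} {T t : ℝ} (ht₀ : 0 ≤ t) (ht : t < exitTime f T) :
    0 < f t := by
  by_contra! hft
  have htT : t ∈ Icc 0 T := ⟨ht₀, (ht.trans_le (exitTime_le f T)).le⟩
  exact ht.not_ge (csInf_le (bddBelow_exitTime_set f T) (Or.inl ⟨htT, hft⟩))

section ExitTime

variable {p β T s : ℝ} {Y Y' : ℝ → ℝ × ℝ}

theorem strictMonoOn_fst_Icc_exitTime
    (hY : ∀ t ∈ Icc 0 T, HasDerivWithinAt Y (Y' t) (Icc 0 T) t)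
    (hY₁ : ∀ t ∈ Icc 0 T, (Y' t).1 = F1 p β (Y t)) :
    StrictMonoOn (fun t => (Y t).1) (Icc 0 (exitTime (fun t => F1 p β (Y t)) T)) := by
  have hsub : Icc 0 (exitTime (fun t => F1 p β (Y t)) T) ⊆ Icc 0 T :=
    Icc_subset_Icc_right (exitTime_le _ _)
  refine strictMonoOn_fst_of_hasDerivWithinAt (fun t ht => (hY t (hsub ht)).mono hsub)
    fun t ht => ?_
  rw [hY₁ t (hsub (Ioo_subset_Icc_self ht))]
  exact pos_of_lt_exitTime (f := fun t => F1 p β (Y t)) ht.1.le ht.2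

theorem exists_graph_Icc_exitTime
    (hY : ∀ t ∈ Icc 0 T, HasDerivWithinAt Y (Y' t) (Icc 0 T) t)
    (hY₁ : ∀ t ∈ Icc 0 T, (Y' t).1 = F1 p β (Y t))
    (hs : s ∈ Icc 0 (exitTime (fun t => F1 p β (Y t)) T)) :
    ∃ g : ℝ → ℝ, ContinuousOn g (Icc (Y 0).1 (Y s).1) ∧ (∀ t ∈ Icc 0 s, g (Y t).1 = (Y t).2) ∧
      (∀ u ∈ Ico (Y 0).1 (Y s).1, 0 < F1 p β (u, g u)) ∧
      ∀ u ∈ Ioo (Y 0).1 (Y s).1, ∃ t ∈ Icc 0 T, Y t = (u, g u) ∧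
        HasDerivAt g ((Y' t).2 / F1 p β (Y t)) u := by
  have hsub : Icc 0 s ⊆ Icc 0 T := Icc_subset_Icc_right (hs.2.trans (exitTime_le _ _))
  have hpos : ∀ t ∈ Ico 0 s, 0 < F1 p β (Y t) := fun t ht =>
    pos_of_lt_exitTime (f := fun t => F1 p β (Y t)) ht.1 (ht.2.trans_le hs.2)
  obtain ⟨g, hgc, hgY, hg'⟩ := exists_graph_of_hasDerivWithinAt hs.1
    (fun t ht => (hY t (hsub ht)).mono hsub)
    fun t ht => (hY₁ t (hsub (Ioo_subset_Icc_self ht))).symm ▸ hpos t (Ioo_subset_Ico_self ht)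
  have hYg : ∀ t ∈ Icc 0 s, Y t = ((Y t).1, g (Y t).1) := fun t ht => by rw [hgY t ht]
  refine ⟨g, hgc, hgY, fun u hu => ?_, fun u hu => ?_⟩
  · rcases hu.1.eq_or_lt with rfl | hu₀
    · have hs₀ : 0 < s := hs.1.lt_of_ne <| by rintro rfl; exact hu.2.ne rfl
      rw [← hYg 0 ⟨le_rfl, hs.1⟩]
      exact hpos 0 ⟨le_rfl, hs₀⟩
    · obtain ⟨t, ht, rfl, -⟩ := hg' u ⟨hu₀, hu.2⟩
      rw [← hYg t (Ioo_subset_Icc_self ht)]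
      exact hpos t (Ioo_subset_Ico_self ht)
  · obtain ⟨t, ht, rfl, hgd⟩ := hg' u hu
    refine ⟨t, hsub (Ioo_subset_Icc_self ht), hYg t (Ioo_subset_Icc_self ht), ?_⟩
    rwa [← hY₁ t (hsub (Ioo_subset_Icc_self ht))]

end ExitTime

section LowerSlope

variable {p β Λ : ℝ}

theorem continuous_F1 : Continuous (F1 p β) := by
  unfold F1
  fun_prop

noncomputable def slopeL (p β Λ : ℝ) (z : ℝ × ℝ) : ℝ := F2L p β Λ z / F1 p β z

/-- With `F₂ᴸ(u,v) = A(u) - B(u) v` and `F₁(u,v) = -p u + β v`, the coefficient is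
`p u B(u) - β A(u)`. -/
theorem slopeL_sub_slopeL {u v₁ v₂ : ℝ} (h₁ : F1 p β (u, v₁) ≠ 0) (h₂ : F1 p β (u, v₂) ≠ 0) :
    slopeL p β Λ (u, v₂) - slopeL p β Λ (u, v₁) =
      (p * u * (2 * (p - 1) + 2 * p * β * u + 2 * β * Λ) -
        β * (2 * p * (p - 1) + 2 * p ^ 2 * u ^ 2)) * (v₂ - v₁) /
        (F1 p β (u, v₁) * F1 p β (u, v₂)) := by
  unfold slopeL
  rw [div_sub_div _ _ h₂ h₁]
  congr 1 <;> simp only [F1, F2L] <;> ring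

theorem exists_slopeL_sub_le (u₀ u₁ : ℝ) {δ : ℝ} (hδ : 0 < δ) :
    ∃ K, ∀ u ∈ Icc u₀ u₁, ∀ v₁ v₂, v₁ ≤ v₂ → δ ≤ F1 p β (u, v₁) → δ ≤ F1 p β (u, v₂) →
      slopeL p β Λ (u, v₂) - slopeL p β Λ (u, v₁) ≤ K * (v₂ - v₁) := by
  obtain ⟨M, hM⟩ := (isCompact_Icc (a := u₀) (b := u₁)).exists_bound_of_continuousOn
    (f := fun u => p * u * (2 * (p - 1) + 2 * p * β * u + 2 * β * Λ) -
        β * (2 * p * (p - 1) + 2 * p ^ 2 * u ^ 2)) (by fun_prop)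
  refine ⟨M / δ ^ 2, fun u hu v₁ v₂ hv h₁ h₂ => ?_⟩
  have hC := (le_abs_self _).trans ((Real.norm_eq_abs _).symm.trans_le (hM u hu))
  have hM₀ : 0 ≤ M := (norm_nonneg _).trans (hM u hu)
  have hv' : 0 ≤ v₂ - v₁ := sub_nonneg.2 hv
  have hF : δ ^ 2 ≤ F1 p β (u, v₁) * F1 p β (u, v₂) := by
    rw [sq]
    exact mul_le_mul h₁ h₂ hδ.le (hδ.trans_le h₁).le
  rw [slopeL_sub_slopeL (hδ.trans_le h₁).ne' (hδ.trans_le h₂).ne', div_mul_eq_mul_div]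
  calc _ ≤ M * (v₂ - v₁) / (F1 p β (u, v₁) * F1 p β (u, v₂)) :=
        div_le_div_of_nonneg_right (mul_le_mul_of_nonneg_right hC hv') ((sq_nonneg δ).trans hF)
    _ ≤ M * (v₂ - v₁) / δ ^ 2 := div_le_div_of_nonneg_left (by positivity) (by positivity) hF

theorem le_of_slopeL_comparison {g h : ℝ → ℝ} {u₀ u₁ : ℝ} (hu : u₀ ≤ u₁)
    (hg : ContinuousOn g (Icc u₀ u₁)) (hh : ContinuousOn h (Icc u₀ u₁))
    (hgF1 : ∀ u ∈ Ico u₀ u₁, 0 < F1 p β (u, g u)) (hhF1 : ∀ u ∈ Ico u₀ u₁, 0 < F1 p β (u, h u))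
    (hg' : ∀ u ∈ Ioo u₀ u₁, ∃ d, HasDerivAt g d u ∧ slopeL p β Λ (u, g u) ≤ d)
    (hh' : ∀ u ∈ Ioo u₀ u₁, ∃ d, HasDerivAt h d u ∧ d ≤ slopeL p β Λ (u, h u))
    (h₀ : h u₀ ≤ g u₀) : h u₁ ≤ g u₁ := by
  choose! g' hg' hg'le using hg'
  choose! h' hh' hh'le using hh'
  have hIco : ∀ u' ∈ Ico u₀ u₁, h u' - g u' ≤ 0 := by
    intro u' hu'
    have hsub : Icc u₀ u' ⊆ Ico u₀ u₁ := fun u hu => ⟨hu.1, hu.2.trans_lt hu'.2⟩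
    have hcont : ∀ k : ℝ → ℝ, ContinuousOn k (Icc u₀ u₁) →
        ContinuousOn (fun u => F1 p β (u, k u)) (Icc u₀ u') := fun k hk =>
      continuous_F1.comp_continuousOn
        (continuousOn_id.prodMk (hk.mono (hsub.trans Ico_subset_Icc_self)))
    obtain ⟨m, hm, hmin⟩ := isCompact_Icc.exists_isMinOn ⟨u₀, left_mem_Icc.2 hu'.1⟩
      ((hcont g hg).inf (hcont h hh))
    obtain ⟨K, hK⟩ := exists_slopeL_sub_le (p := p) (β := β) (Λ := Λ) u₀ u'
      (lt_min (hgF1 m (hsub hm)) (hhF1 m (hsub hm)))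
    have hIoo : Ioo u₀ u' ⊆ Ioo u₀ u₁ := Ioo_subset_Ioo_right hu'.2.le
    refine nonpos_of_hasDerivAt_le_mul (K := K)
      ((hh.sub hg).mono (hsub.trans Ico_subset_Icc_self))
      (fun u hu => (hh' u (hIoo hu)).sub (hg' u (hIoo hu))) (fun u hu hw => ?_)
      (sub_nonpos.2 h₀) u' (right_mem_Icc.2 hu'.1)
    have hδ : min (F1 p β (m, g m)) (F1 p β (m, h m)) ≤
        min (F1 p β (u, g u)) (F1 p β (u, h u)) := hmin (Ioo_subset_Icc_self hu)
    calc h' u - g' u ≤ slopeL p β Λ (u, h u) - slopeL p β Λ (u, g u) :=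
          sub_le_sub (hh'le u (hIoo hu)) (hg'le u (hIoo hu))
      _ ≤ K * (h u - g u) := hK u (Ioo_subset_Icc_self hu) _ _ (sub_pos.1 hw).le
          (hδ.trans (min_le_left _ _)) (hδ.trans (min_le_right _ _))
  rcases hu.eq_or_lt with rfl | hu
  · exact h₀
  · have hcl : u₁ ∈ closure (Ico u₀ u₁) := by
      rw [closure_Ico hu.ne]
      exact right_mem_Icc.2 hu.le
    exact sub_nonpos.1 <|
      le_on_closure hIco (by rw [closure_Ico hu.ne]; exact hh.sub hg) continuousOn_const hcl

end LowerSlope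

theorem lower_flow_graph_comparison_general
    (p β Λ T T' : ℝ)
    (X X' : ℝ → ℝ × ℝ) (hXI : CondI p β Λ T X X')
    (AL : ℝ → ℝ × ℝ)
    (hAL : ∀ t ∈ Icc (0 : ℝ) T', HasDerivWithinAt AL (PhiL p β Λ (AL t)) (Icc (0 : ℝ) T') t)
    (hAL0 : AL 0 = X 0) :
    StrictMonoOn (fun t => (X t).1)
      (Icc (0 : ℝ) (sInf ({t ∈ Icc (0 : ℝ) T | F1 p β (X t) ≤ 0} ∪ {T}))) ∧
    (∀ s ∈ Icc (0 : ℝ) (sInf ({t ∈ Icc (0 : ℝ) T | F1 p β (X t) ≤ 0} ∪ {T})),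
      ∀ t ∈ Icc (0 : ℝ) (sInf ({t ∈ Icc (0 : ℝ) T' | F1 p β (AL t) ≤ 0} ∪ {T'})),
        (X s).1 = (AL t).1 → (AL t).2 ≤ (X s).2) := by
  obtain ⟨hX, -, hX₁, hX₂⟩ := hXI
  have hXmono := strictMonoOn_fst_Icc_exitTime hX hX₁
  refine ⟨hXmono, fun s hs t ht hst => ?_⟩
  obtain ⟨g, hgc, hgX, hgF1, hg'⟩ := exists_graph_Icc_exitTime hX hX₁ hs
  obtain ⟨h, hhc, hhA, hhF1, hh'⟩ := exists_graph_Icc_exitTime hAL (fun _ _ => rfl) ht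
  have hA₀ : (AL 0).1 = (X 0).1 := by rw [hAL0]
  rw [hA₀, ← hst] at hhc hhF1 hh'
  rw [← hgX s ⟨hs.1, le_rfl⟩, ← hhA t ⟨ht.1, le_rfl⟩, ← hst]
  refine le_of_slopeL_comparison (Λ := Λ)
    (hXmono.monotoneOn ⟨le_rfl, hs.1.trans hs.2⟩ hs hs.1) hgc hhc hgF1 hhF1 (fun u hu => ?_)
    (fun u hu => ?_) (by rw [hgX 0 ⟨le_rfl, hs.1⟩, ← hA₀, hhA 0 ⟨le_rfl, ht.1⟩, hAL0])
  · obtain ⟨r, hr, hXr, hd⟩ := hg' u hu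
    refine ⟨_, hd, ?_⟩
    rw [slopeL, ← hXr]
    exact div_le_div_of_nonneg_right (hX₂ r hr).1 (hXr ▸ hgF1 u (Ioo_subset_Ico_self hu)).le
  · obtain ⟨r, -, hAr, hd⟩ := hh' u hu
    exact ⟨_, hd, by rw [slopeL, ← hAr]; rfl⟩

/-- Comparison of a curve satisfying Condition I with the lower bounding flow `A_L`,
up to the first times `τ`, `τᴸ` at which `F₁` becomes nonpositive (taken to be `T`,
resp. `T'`, if this never happens): `X₁` is strictly increasing on `[0,τ]`, and whenever
`X₁(s) = A_{L,1}(t)` (for `s ≤ τ`, `t ≤ τᴸ`) one has `X₂(s) ≥ A_{L,2}(t)`. -/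
theorem lower_flow_graph_comparison
    (p β Λ T T' : ℝ) (hp : 2 < p) (hβ : 0 < β) (hΛ : 0 < Λ) (hT : 0 < T) (hT' : 0 < T')
    (X X' : ℝ → ℝ × ℝ) (hXI : CondI p β Λ T X X')
    (hXrange : ∀ t ∈ Icc (0 : ℝ) T, 0 ≤ (X t).2)
    (hX0 : 0 < F1 p β (X 0))
    (AL : ℝ → ℝ × ℝ)
    (hAL : ∀ t ∈ Icc (0 : ℝ) T', HasDerivWithinAt AL (PhiL p β Λ (AL t)) (Icc (0 : ℝ) T') t)
    (hAL0 : AL 0 = X 0) :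
    StrictMonoOn (fun t => (X t).1)
      (Icc (0 : ℝ) (sInf ({t ∈ Icc (0 : ℝ) T | F1 p β (X t) ≤ 0} ∪ {T}))) ∧
    (∀ s ∈ Icc (0 : ℝ) (sInf ({t ∈ Icc (0 : ℝ) T | F1 p β (X t) ≤ 0} ∪ {T})),
      ∀ t ∈ Icc (0 : ℝ) (sInf ({t ∈ Icc (0 : ℝ) T' | F1 p β (AL t) ≤ 0} ∪ {T'})),
        (X s).1 = (AL t).1 → (AL t).2 ≤ (X s).2) :=
  lower_flow_graph_comparison_general p β Λ T T' X X' hXI AL hAL hAL0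
end

section
/- Fix real constants p > 2, β > 0, Λ > 0 and T, T' > 0. Let X : [0,T] → ℝ × [0,∞) be continuously differentiable and satisfy Condition I, with F₁(X(0)) > 0. Let A_U : [0,T'] → ℝ² be a solution of the initial value problem A_U'(t) = Φ_U(A_U(t)), A_U(0) = X(0). Define τ = inf{t ∈ [0,T] : F₁(X(t)) ≤ 0} (with τ = T if this set is empty) and τᵁ = inf{t ∈ [0,T'] : F₁(A_U(t)) ≤ 0} (with τᵁ = T' if empty). Then for every s ∈ [0, τ] and t ∈ [0, τᵁ] with X₁(s) = A_{U,1}(t), one has X₂(s) ≤ A_{U,2}(t). -/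
open Set Filter Topology

/-!
Up to the first times `τ`, `τᵁ` at which `F₁` vanishes, both curves have strictly increasing
first coordinate, so they are graphs `v = x(u)` and `v = a(u)` over it. Along an orbit of `Φ_U`
one has `dv/du = F₂ᵁ/F₁`, so `a` solves, and by Condition I `x` is a subsolution of, the scalar
equation `v' = F₂ᵁ(u,v)/F₁(u,v)`, with the same initial value. Since `F₁` increases in `v`
(`β > 0`), the right-hand side is one-sidedly Lipschitz above `a` on every compact piece where
`F₁(u, a(u)) > 0`, so the barrier `a + ε e^{K u}` is never crossed by `x`; letting `ε → 0` and
passing to the endpoint by continuity gives `x ≤ a`.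
-/

section Deriv

variable {𝕜 F : Type*} [NontriviallyNormedField 𝕜] [NormedAddCommGroup F] [NormedSpace 𝕜 F]

theorem HasDerivWithinAt.fst {Y : 𝕜 → 𝕜 × F} {Y' : 𝕜 × F} {s : Set 𝕜} {t : 𝕜}
    (hY : HasDerivWithinAt Y Y' s t) : HasDerivWithinAt (fun t => (Y t).1) Y'.1 s t :=
  (ContinuousLinearMap.fst 𝕜 𝕜 F).hasFDerivAt.comp_hasDerivWithinAt t hY

theorem HasDerivWithinAt.snd {Y : 𝕜 → 𝕜 × F} {Y' : 𝕜 × F} {s : Set 𝕜} {t : 𝕜}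
    (hY : HasDerivWithinAt Y Y' s t) : HasDerivWithinAt (fun t => (Y t).2) Y'.2 s t :=
  (ContinuousLinearMap.snd 𝕜 𝕜 F).hasFDerivAt.comp_hasDerivWithinAt t hY

theorem HasDerivWithinAt.of_local_left_inverse {f g : 𝕜 → 𝕜} {f' a : 𝕜} {s t : Set 𝕜}
    (hg : Tendsto g (𝓝[s] a) (𝓝[t] (g a))) (hf : HasDerivWithinAt f f' t (g a)) (hf' : f' ≠ 0)
    (ha : a ∈ s) (hfg : ∀ᶠ y in 𝓝[s] a, f (g y) = y) : HasDerivWithinAt g f'⁻¹ s a :=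
  HasFDerivWithinAt.of_local_left_inverse (f' := ContinuousLinearEquiv.unitsEquivAut 𝕜
    (Units.mk0 f' hf')) hg hf ha hfg

theorem HasDerivWithinAt.snd_comp_of_fst_comp_eq {Y : 𝕜 → 𝕜 × F} {Y' : 𝕜 × F} {g : 𝕜 → 𝕜}
    {s t : Set 𝕜} {u : 𝕜} (hY : HasDerivWithinAt Y Y' t (g u)) (h₁ : Y'.1 ≠ 0)
    (hg : ContinuousWithinAt g s u) (hgst : MapsTo g s t) (hu : u ∈ s)
    (hfst : ∀ᶠ y in 𝓝[s] u, (Y (g y)).1 = y) :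
    HasDerivWithinAt (fun y => (Y (g y)).2) (Y'.1⁻¹ • Y'.2) s u :=
  hY.snd.scomp u (.of_local_left_inverse (hg.tendsto_nhdsWithin hgst) hY.fst h₁ hu hfst) hgst

end Deriv

section Inverse

variable {α δ : Type*} [ConditionallyCompleteLinearOrder α] [TopologicalSpace α] [OrderTopology α]
  [DenselyOrdered α] [LinearOrder δ] [TopologicalSpace δ] [OrderTopology δ]

theorem exists_continuous_inverse_of_strictMonoOn {f : α → δ} {a b : α} (hab : a ≤ b)
    (hf : ContinuousOn f (Icc a b)) (hmono : StrictMonoOn f (Icc a b)) :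
    ∃ g : δ → α, Continuous g ∧ (∀ y, g y ∈ Icc a b) ∧
      (∀ y ∈ Icc (f a) (f b), f (g y) = y) ∧ ∀ x ∈ Icc a b, g (f x) = x := by
  have hfab : f a ≤ f b := hmono.monotoneOn (left_mem_Icc.2 hab) (right_mem_Icc.2 hab) hab
  let φ : Icc a b → Icc (f a) (f b) := fun x =>
    ⟨f x, hmono.monotoneOn (left_mem_Icc.2 hab) x.2 x.2.1,
      hmono.monotoneOn x.2 (right_mem_Icc.2 hab) x.2.2⟩
  have hφ : StrictMono φ := fun x y hxy => hmono x.2 y.2 hxy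
  have hφsurj : Function.Surjective φ := fun y => by
    obtain ⟨x, hx, hxy⟩ := intermediate_value_Icc hab hf y.2
    exact ⟨⟨x, hx⟩, Subtype.ext hxy⟩
  let e := hφ.orderIsoOfSurjective φ hφsurj
  refine ⟨IccExtend hfab fun y => (e.symm y : α), (continuous_subtype_val.comp
    e.symm.continuous).Icc_extend', fun y => (e.symm _).2, fun y hy => ?_, fun x hx => ?_⟩
  · rw [IccExtend_of_mem hfab _ hy]
    exact congrArg Subtype.val (hφ.orderIsoOfSurjective_self_symm_apply φ hφsurj ⟨y, hy⟩)
  · rw [IccExtend_of_mem hfab _ (φ ⟨x, hx⟩).2]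
    exact congrArg Subtype.val (hφ.orderIsoOfSurjective_symm_apply_self φ hφsurj ⟨x, hx⟩)

end Inverse

theorem exists_graph_of_strictMonoOn_fst {Y Y' : ℝ → ℝ × ℝ} {T τ : ℝ} (hτ : 0 ≤ τ) (hτT : τ ≤ T)
    (hY : ∀ t ∈ Icc 0 T, HasDerivWithinAt Y (Y' t) (Icc 0 T) t)
    (hmono : StrictMonoOn (fun t => (Y t).1) (Icc 0 τ)) (hY' : ∀ t ∈ Ico 0 τ, (Y' t).1 ≠ 0) :
    ∃ γ : ℝ → ℝ, Continuous γ ∧ (∀ t ∈ Icc 0 τ, γ (Y t).1 = (Y t).2) ∧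
      ∀ u ∈ Ico (Y 0).1 (Y τ).1, ∃ t ∈ Ico 0 τ, Y t = (u, γ u) ∧
        HasDerivWithinAt γ ((Y' t).2 / (Y' t).1) (Ici u) u := by
  have hsub : Icc 0 τ ⊆ Icc 0 T := Icc_subset_Icc_right hτT
  have hYc : ContinuousOn Y (Icc 0 T) := fun t ht => (hY t ht).continuousWithinAt
  obtain ⟨g, hg, hgmem, hYg, hgY⟩ :=
    exists_continuous_inverse_of_strictMonoOn hτ (hYc.mono hsub).fst hmono
  refine ⟨fun y => (Y (g y)).2, (hYc.comp_continuous hg fun y => hsub (hgmem y)).snd,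
    fun t ht => by simp only [hgY t ht], fun u hu => ?_⟩
  have hgu : g u ∈ Ico 0 τ := by
    refine ⟨(hgmem u).1, (hgmem u).2.lt_of_ne fun h => hu.2.ne ?_⟩
    rw [← hYg u (Ico_subset_Icc_self hu), h]
  refine ⟨g u, hgu, Prod.ext (hYg u (Ico_subset_Icc_self hu)) rfl, ?_⟩
  have hYg' : ∀ᶠ y in 𝓝[≥] u, (Y (g y)).1 = y := by
    filter_upwards [Icc_mem_nhdsGE hu.2] with y hy using hYg y ⟨hu.1.trans hy.1, hy.2⟩
  simpa only [smul_eq_mul, ← div_eq_inv_mul] using (hY _ (hsub (hgmem u))).snd_comp_of_fst_comp_eq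
    (hY' _ hgu) hg.continuousWithinAt (fun y _ => hsub (hgmem y)) self_mem_Ici hYg'

section Comparison

variable {x a : ℝ → ℝ} {G : ℝ → ℝ → ℝ} {u₀ u₁ : ℝ}

theorem le_of_hasDerivWithinAt_of_oneSided_lipschitz {K : ℝ}
    (hx : ContinuousOn x (Icc u₀ u₁)) (ha : ContinuousOn a (Icc u₀ u₁))
    (hx' : ∀ u ∈ Ico u₀ u₁, ∃ x', HasDerivWithinAt x x' (Ici u) u ∧ x' ≤ G u (x u))
    (ha' : ∀ u ∈ Ico u₀ u₁, HasDerivWithinAt a (G u (a u)) (Ici u) u)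
    (hG : ∀ u ∈ Ico u₀ u₁, ∀ v, a u < v → G u v - G u (a u) ≤ K * (v - a u))
    (h₀ : x u₀ ≤ a u₀) : ∀ u ∈ Icc u₀ u₁, x u ≤ a u := by
  choose! x' hx' hxG using hx'
  intro u hu
  set E : ℝ → ℝ := fun w => Real.exp ((K + 1) * (w - u₀))
  have hE : ∀ w, HasDerivAt E ((K + 1) * E w) w := fun w => by
    simpa [E, mul_comm] using ((hasDerivAt_id w).sub_const u₀ |>.const_mul (K + 1)).exp
  have hfence : ∀ ε > 0, x u ≤ a u + ε * E u := by
    intro ε hε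
    refine image_le_of_deriv_right_lt_deriv_boundary' hx hx' (B := fun w => a w + ε * E w)
      (B' := fun w => G w (a w) + ε * ((K + 1) * E w)) ?_
      (ha.add (continuousOn_const.mul fun w _ => (hE w).continuousAt.continuousWithinAt))
      (fun w hw => (ha' w hw).add ((hE w).hasDerivWithinAt.const_mul ε)) ?_ hu
    · have : 0 < ε * E u₀ := by positivity
      linarith
    · intro w hw hxw
      have he : 0 < ε * E w := by positivity
      have hlip := hG w hw (x w) (by rw [hxw]; linarith)
      calc x' w ≤ G w (x w) := hxG w hw
        _ ≤ G w (a w) + K * (ε * E w) := by rw [hxw] at hlip ⊢; linarith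
        _ < G w (a w) + ε * ((K + 1) * E w) := by linarith
  refine le_of_forall_pos_le_add fun ε hε => ?_
  have hEu : 0 < E u := Real.exp_pos _
  simpa [div_mul_cancel₀ _ hEu.ne'] using hfence (ε / E u) (div_pos hε hEu)

theorem le_of_hasDerivWithinAt_of_locally_oneSided_lipschitz
    (hx : ContinuousOn x (Icc u₀ u₁)) (ha : ContinuousOn a (Icc u₀ u₁))
    (hx' : ∀ u ∈ Ico u₀ u₁, ∃ x', HasDerivWithinAt x x' (Ici u) u ∧ x' ≤ G u (x u))
    (ha' : ∀ u ∈ Ico u₀ u₁, HasDerivWithinAt a (G u (a u)) (Ici u) u)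
    (hG : ∀ u' ∈ Ico u₀ u₁, ∃ K, ∀ u ∈ Icc u₀ u', ∀ v, a u < v → G u v - G u (a u) ≤ K * (v - a u))
    (h₀ : x u₀ ≤ a u₀) : ∀ u ∈ Icc u₀ u₁, x u ≤ a u := by
  have hIco : ∀ u ∈ Ico u₀ u₁, x u ≤ a u := fun u hu => by
    obtain ⟨K, hK⟩ := hG u hu
    have hsub : Ico u₀ u ⊆ Ico u₀ u₁ := Ico_subset_Ico_right hu.2.le
    exact le_of_hasDerivWithinAt_of_oneSided_lipschitz
      (hx.mono (Icc_subset_Icc_right hu.2.le)) (ha.mono (Icc_subset_Icc_right hu.2.le))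
      (fun w hw => hx' w (hsub hw)) (fun w hw => ha' w (hsub hw))
      (fun w hw => hK w (Ico_subset_Icc_self hw)) h₀ u (right_mem_Icc.2 hu.1)
  intro u hu
  obtain hu₁ | rfl := hu.2.lt_or_eq
  · exact hIco u ⟨hu.1, hu₁⟩
  obtain rfl | hu₀ := hu.1.eq_or_lt
  · exact h₀
  rw [← closure_Ico hu₀.ne] at hx ha hu
  exact le_on_closure hIco hx ha hu

end Comparison

-- The theorem's `τ` and `τᵁ` are `firstNonposTime (F₁ ∘ X) T` and `firstNonposTime (F₁ ∘ A_U) T'`.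
noncomputable def firstNonposTime (φ : ℝ → ℝ) (T : ℝ) : ℝ :=
  sInf ({t ∈ Icc 0 T | φ t ≤ 0} ∪ {T})

section FirstNonposTime

variable {φ : ℝ → ℝ} {T : ℝ}

theorem bddBelow_firstNonposTime_set (φ : ℝ → ℝ) (T : ℝ) :
    BddBelow ({t ∈ Icc 0 T | φ t ≤ 0} ∪ {T}) := by
  refine ⟨min 0 T, ?_⟩
  rintro t (ht | rfl)
  exacts [(min_le_left _ _).trans ht.1.1, min_le_right _ _]

theorem firstNonposTime_le (φ : ℝ → ℝ) (T : ℝ) : firstNonposTime φ T ≤ T :=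
  csInf_le (bddBelow_firstNonposTime_set φ T) (Or.inr rfl)

theorem pos_of_lt_firstNonposTime {s : ℝ} (hs : 0 ≤ s) (hsτ : s < firstNonposTime φ T) :
    0 < φ s := by
  by_contra! h
  exact hsτ.not_ge <| csInf_le (bddBelow_firstNonposTime_set φ T)
    (Or.inl ⟨⟨hs, hsτ.le.trans (firstNonposTime_le φ T)⟩, h⟩)

theorem strictMonoOn_Icc_firstNonposTime {f : ℝ → ℝ}
    (hf : ∀ t ∈ Icc 0 T, HasDerivWithinAt f (φ t) (Icc 0 T) t) :
    StrictMonoOn f (Icc 0 (firstNonposTime φ T)) := by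
  have hsub : Icc 0 (firstNonposTime φ T) ⊆ Icc 0 T :=
    Icc_subset_Icc_right (firstNonposTime_le φ T)
  refine strictMonoOn_of_hasDerivWithinAt_pos (f' := φ) (convex_Icc _ _)
    (fun t ht => (hf t (hsub ht)).continuousWithinAt.mono hsub) (fun t ht => ?_) (fun t ht => ?_)
  all_goals rw [interior_Icc] at *
  · exact (hf t (hsub (Ioo_subset_Icc_self ht))).mono (Ioo_subset_Icc_self.trans hsub)
  · exact pos_of_lt_firstNonposTime ht.1.le ht.2

end FirstNonposTime

theorem exists_graph_before_firstNonposTime {Y Y' : ℝ → ℝ × ℝ} {φ : ℝ → ℝ} {T : ℝ}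
    (hY : ∀ t ∈ Icc 0 T, HasDerivWithinAt Y (Y' t) (Icc 0 T) t)
    (hY₁ : ∀ t ∈ Icc 0 T, (Y' t).1 = φ t) (hτ : 0 ≤ firstNonposTime φ T) :
    StrictMonoOn (fun t => (Y t).1) (Icc 0 (firstNonposTime φ T)) ∧
    ∃ γ : ℝ → ℝ, Continuous γ ∧ (∀ t ∈ Icc 0 (firstNonposTime φ T), γ (Y t).1 = (Y t).2) ∧
      ∀ u ∈ Ico (Y 0).1 (Y (firstNonposTime φ T)).1, ∃ t ∈ Ico 0 (firstNonposTime φ T),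
        Y t = (u, γ u) ∧ 0 < φ t ∧ HasDerivWithinAt γ ((Y' t).2 / φ t) (Ici u) u := by
  have hτT := firstNonposTime_le φ T
  have hpos : ∀ t ∈ Ico 0 (firstNonposTime φ T), 0 < φ t := fun t ht =>
    pos_of_lt_firstNonposTime ht.1 ht.2
  have hIcc : ∀ t ∈ Ico 0 (firstNonposTime φ T), t ∈ Icc 0 T := fun t ht =>
    ⟨ht.1, ht.2.le.trans hτT⟩
  have hmono : StrictMonoOn (fun t => (Y t).1) (Icc 0 (firstNonposTime φ T)) :=
    strictMonoOn_Icc_firstNonposTime fun t ht => hY₁ t ht ▸ (hY t ht).fst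
  obtain ⟨γ, hγ, hγY, hγ'⟩ := exists_graph_of_strictMonoOn_fst hτ hτT hY hmono
    fun t ht => hY₁ t (hIcc t ht) ▸ (hpos t ht).ne'
  refine ⟨hmono, γ, hγ, hγY, fun u hu => ?_⟩
  obtain ⟨t, ht, hYt, hγt⟩ := hγ' u hu
  exact ⟨t, ht, hYt, hpos t ht, hY₁ t (hIcc t ht) ▸ hγt⟩

noncomputable def orbitSlopeU (p β Λ u v : ℝ) : ℝ := F2U p β Λ (u, v) / F1 p β (u, v)

-- `∂ orbitSlopeU / ∂v`, using `∂F₁/∂v = β` and `∂F₂ᵁ/∂v = 2βΛ - 2(p-1) - 2pβu`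
noncomputable def orbitSlopeUDeriv (p β Λ u v : ℝ) : ℝ :=
  ((2 * β * Λ - 2 * (p - 1) - 2 * p * β * u) * F1 p β (u, v) - β * F2U p β Λ (u, v)) /
    F1 p β (u, v) ^ 2

section OrbitSlope

variable {p β Λ : ℝ}

theorem F1_eq_add (u v w : ℝ) : F1 p β (u, v) = F1 p β (u, w) + β * (v - w) := by
  simp only [F1]; ring

/-- `F₁` and `F₂ᵁ` are affine in `v`, so `v ↦ F₂ᵁ / F₁` is a Möbius map: its difference quotient
is its `v`-derivative at `w` times `F₁(u,w) / F₁(u,v)`. -/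
theorem orbitSlopeU_sub {u v w : ℝ} (hv : F1 p β (u, v) ≠ 0) (hw : F1 p β (u, w) ≠ 0) :
    orbitSlopeU p β Λ u v - orbitSlopeU p β Λ u w =
      (v - w) * orbitSlopeUDeriv p β Λ u w * (F1 p β (u, w) / F1 p β (u, v)) := by
  simp only [orbitSlopeU, orbitSlopeUDeriv] at *
  field_simp
  simp only [F1, F2U]
  ring

theorem orbitSlopeU_sub_le {u v w M : ℝ} (hβ : 0 < β) (hwv : w < v) (hw : 0 < F1 p β (u, w))
    (hM : |orbitSlopeUDeriv p β Λ u w| ≤ M) :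
    orbitSlopeU p β Λ u v - orbitSlopeU p β Λ u w ≤ M * (v - w) := by
  have hv : F1 p β (u, w) ≤ F1 p β (u, v) := by
    rw [F1_eq_add u v w]; nlinarith
  set r := F1 p β (u, w) / F1 p β (u, v)
  have hr₀ : 0 ≤ r := div_nonneg hw.le (hw.trans_le hv).le
  have hr₁ : r ≤ 1 := div_le_one_of_le₀ hv (hw.trans_le hv).le
  have hκr : orbitSlopeUDeriv p β Λ u w * r ≤ M := calc
    _ ≤ |orbitSlopeUDeriv p β Λ u w| * r := mul_le_mul_of_nonneg_right (le_abs_self _) hr₀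
    _ ≤ |orbitSlopeUDeriv p β Λ u w| := mul_le_of_le_one_right (abs_nonneg _) hr₁
    _ ≤ M := hM
  rw [orbitSlopeU_sub (hw.trans_le hv).ne' hw.ne', mul_assoc]
  nlinarith

theorem exists_oneSided_lipschitz_orbitSlopeU (hβ : 0 < β) {a : ℝ → ℝ} {u₀ u₁ : ℝ}
    (ha : ContinuousOn a (Icc u₀ u₁)) (hpos : ∀ u ∈ Icc u₀ u₁, 0 < F1 p β (u, a u)) :
    ∃ K, ∀ u ∈ Icc u₀ u₁, ∀ v, a u < v →
      orbitSlopeU p β Λ u v - orbitSlopeU p β Λ u (a u) ≤ K * (v - a u) := by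
  have hκ : ContinuousOn (fun u => orbitSlopeUDeriv p β Λ u (a u)) (Icc u₀ u₁) := by
    refine ContinuousOn.div ?_ ?_ fun u hu => (pow_pos (hpos u hu) 2).ne'
    · simp only [F1, F2U]; fun_prop
    · simp only [F1]; fun_prop
  obtain ⟨M, hM⟩ := isCompact_Icc.exists_bound_of_continuousOn hκ
  exact ⟨M, fun u hu v hv => orbitSlopeU_sub_le hβ hv (hpos u hu) (hM u hu)⟩

end OrbitSlope

theorem le_of_hasDerivWithinAt_orbitSlopeU {p β Λ : ℝ} (hβ : 0 < β) {x a : ℝ → ℝ} {u₀ u₁ : ℝ}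
    (hx : ContinuousOn x (Icc u₀ u₁)) (ha : ContinuousOn a (Icc u₀ u₁))
    (hx' : ∀ u ∈ Ico u₀ u₁, ∃ x', HasDerivWithinAt x x' (Ici u) u ∧
      x' ≤ orbitSlopeU p β Λ u (x u))
    (ha' : ∀ u ∈ Ico u₀ u₁, 0 < F1 p β (u, a u) ∧
      HasDerivWithinAt a (orbitSlopeU p β Λ u (a u)) (Ici u) u)
    (h₀ : x u₀ ≤ a u₀) : ∀ u ∈ Icc u₀ u₁, x u ≤ a u :=
  le_of_hasDerivWithinAt_of_locally_oneSided_lipschitz hx ha hx' (fun u hu => (ha' u hu).2)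
    (fun _ hu' => exists_oneSided_lipschitz_orbitSlopeU hβ
      (ha.mono (Icc_subset_Icc_right hu'.2.le)) fun u hu => (ha' u ⟨hu.1, hu.2.trans_lt hu'.2⟩).1)
    h₀

section OrbitGraphs

variable {p β Λ T : ℝ}

theorem exists_orbitSlopeU_subsolution_graph {Y Y' : ℝ → ℝ × ℝ}
    (hY : ∀ t ∈ Icc 0 T, HasDerivWithinAt Y (Y' t) (Icc 0 T) t)
    (hY₁ : ∀ t ∈ Icc 0 T, (Y' t).1 = F1 p β (Y t))
    (hY₂ : ∀ t ∈ Icc 0 T, (Y' t).2 ≤ F2U p β Λ (Y t))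
    (hτ : 0 ≤ firstNonposTime (fun t => F1 p β (Y t)) T) :
    StrictMonoOn (fun t => (Y t).1) (Icc 0 (firstNonposTime (fun t => F1 p β (Y t)) T)) ∧
    ∃ γ : ℝ → ℝ, Continuous γ ∧
      (∀ t ∈ Icc 0 (firstNonposTime (fun t => F1 p β (Y t)) T), γ (Y t).1 = (Y t).2) ∧
      ∀ u ∈ Ico (Y 0).1 (Y (firstNonposTime (fun t => F1 p β (Y t)) T)).1,
        ∃ γ', HasDerivWithinAt γ γ' (Ici u) u ∧ γ' ≤ orbitSlopeU p β Λ u (γ u) := by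
  obtain ⟨hmono, γ, hγ, hγY, hγ'⟩ := exists_graph_before_firstNonposTime hY hY₁ hτ
  refine ⟨hmono, γ, hγ, hγY, fun u hu => ?_⟩
  obtain ⟨t, ht, hYt, hF, hd⟩ := hγ' u hu
  refine ⟨_, hd, ?_⟩
  rw [orbitSlopeU, ← hYt]
  exact div_le_div_of_nonneg_right (hY₂ t ⟨ht.1, ht.2.le.trans (firstNonposTime_le _ _)⟩) hF.le

theorem exists_orbitSlopeU_solution_graph {A : ℝ → ℝ × ℝ}
    (hA : ∀ t ∈ Icc 0 T, HasDerivWithinAt A (PhiU p β Λ (A t)) (Icc 0 T) t)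
    (hτ : 0 ≤ firstNonposTime (fun t => F1 p β (A t)) T) :
    StrictMonoOn (fun t => (A t).1) (Icc 0 (firstNonposTime (fun t => F1 p β (A t)) T)) ∧
    ∃ γ : ℝ → ℝ, Continuous γ ∧
      (∀ t ∈ Icc 0 (firstNonposTime (fun t => F1 p β (A t)) T), γ (A t).1 = (A t).2) ∧
      ∀ u ∈ Ico (A 0).1 (A (firstNonposTime (fun t => F1 p β (A t)) T)).1,
        0 < F1 p β (u, γ u) ∧ HasDerivWithinAt γ (orbitSlopeU p β Λ u (γ u)) (Ici u) u := by
  obtain ⟨hmono, γ, hγ, hγA, hγ'⟩ :=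
    exists_graph_before_firstNonposTime (φ := fun t => F1 p β (A t)) hA (fun _ _ => rfl) hτ
  refine ⟨hmono, γ, hγ, hγA, fun u hu => ?_⟩
  obtain ⟨t, -, hAt, hF, hd⟩ := hγ' u hu
  rw [hAt] at hF hd
  exact ⟨hF, hd⟩

end OrbitGraphs

theorem upper_flow_graph_comparison_general
    (p β Λ T T' : ℝ) (hβ : 0 < β)
    (X X' : ℝ → ℝ × ℝ) (hXI : CondI p β Λ T X X')
    (AU : ℝ → ℝ × ℝ)
    (hAU : ∀ t ∈ Icc (0 : ℝ) T', HasDerivWithinAt AU (PhiU p β Λ (AU t)) (Icc (0 : ℝ) T') t)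
    (hAU0 : AU 0 = X 0) :
    ∀ s ∈ Icc (0 : ℝ) (sInf ({t ∈ Icc (0 : ℝ) T | F1 p β (X t) ≤ 0} ∪ {T})),
      ∀ t ∈ Icc (0 : ℝ) (sInf ({t ∈ Icc (0 : ℝ) T' | F1 p β (AU t) ≤ 0} ∪ {T'})),
        (X s).1 = (AU t).1 → (X s).2 ≤ (AU t).2 := by
  obtain ⟨hX, -, hX₁, hX₂⟩ := hXI
  intro s hs t ht hst
  have hτ := hs.1.trans hs.2
  have hτU := ht.1.trans ht.2
  obtain ⟨hXmono, x, hx, hxX, hx'⟩ :=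
    exists_orbitSlopeU_subsolution_graph hX hX₁ (fun t ht => (hX₂ t ht).2) hτ
  obtain ⟨hAmono, a, ha, haA, ha'⟩ := exists_orbitSlopeU_solution_graph hAU hτU
  rw [hAU0] at ha'
  have hcmp := le_of_hasDerivWithinAt_orbitSlopeU hβ hx.continuousOn ha.continuousOn
    (fun u hu => hx' u ⟨hu.1, hu.2.trans_le (min_le_left _ _)⟩)
    (fun u hu => ha' u ⟨hu.1, hu.2.trans_le (min_le_right _ _)⟩)
    (by rw [hxX 0 (left_mem_Icc.2 hτ), ← hAU0, haA 0 (left_mem_Icc.2 hτU)])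
  have hu : (X s).1 ∈ Icc (X 0).1 (min (X (firstNonposTime _ T)).1 (AU (firstNonposTime _ T')).1) :=
    ⟨hXmono.monotoneOn (left_mem_Icc.2 hτ) hs hs.1,
      le_min (hXmono.monotoneOn hs (right_mem_Icc.2 hτ) hs.2)
        (hst ▸ hAmono.monotoneOn ht (right_mem_Icc.2 hτU) ht.2)⟩
  calc (X s).2 = x (X s).1 := (hxX s hs).symm
    _ ≤ a (X s).1 := hcmp _ hu
    _ = (AU t).2 := by rw [hst, haA t ht]

/-- Comparison of a curve satisfying Condition I with the upper bounding flow `A_U`,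
up to the first times `τ`, `τᵁ` at which `F₁` becomes nonpositive (taken to be `T`,
resp. `T'`, if this never happens): whenever `X₁(s) = A_{U,1}(t)` (for `s ≤ τ`, `t ≤ τᵁ`)
one has `X₂(s) ≤ A_{U,2}(t)`. -/
theorem upper_flow_graph_comparison
    (p β Λ T T' : ℝ) (hp : 2 < p) (hβ : 0 < β) (hΛ : 0 < Λ) (hT : 0 < T) (hT' : 0 < T')
    (X X' : ℝ → ℝ × ℝ) (hXI : CondI p β Λ T X X')
    (hXrange : ∀ t ∈ Icc (0 : ℝ) T, 0 ≤ (X t).2)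
    (hX0 : 0 < F1 p β (X 0))
    (AU : ℝ → ℝ × ℝ)
    (hAU : ∀ t ∈ Icc (0 : ℝ) T', HasDerivWithinAt AU (PhiU p β Λ (AU t)) (Icc (0 : ℝ) T') t)
    (hAU0 : AU 0 = X 0) :
    ∀ s ∈ Icc (0 : ℝ) (sInf ({t ∈ Icc (0 : ℝ) T | F1 p β (X t) ≤ 0} ∪ {T})),
      ∀ t ∈ Icc (0 : ℝ) (sInf ({t ∈ Icc (0 : ℝ) T' | F1 p β (AU t) ≤ 0} ∪ {T'})),
        (X s).1 = (AU t).1 → (X s).2 ≤ (AU t).2 :=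
  upper_flow_graph_comparison_general p β Λ T T' hβ X X' hXI AU hAU hAU0
end

section
/- Fix real constants p > 2, β > 0, Λ > 0, a nonempty compact set W ⊂ ℝ × [0,∞), and ε > 0. There exists T₀ > 0 such that for every T ≥ T₀ and every continuously differentiable U : [0,T] → ℝ² satisfying Condition I with U(t) ∈ W for all t ∈ [0,T], one has U₁(t) ≥ u_c − ε and U₂(t) ≥ (p·u_c/β) − ε for all t ∈ [T₀, T]. -/
open Set

/-- `u_c = β(1 + βΛ/(p-1))⁻¹`. -/
noncomputable def uCrit (p β Λ : ℝ) : ℝ := β * (1 + β * Λ / (p - 1))⁻¹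

/-!
Write `μ = p - 1 + βΛ` and `v_c = p u_c / β`; then `F₂ᴸ(u, v) = 2μ(v_c - v) - 2pu F₁(u, v)`, so the
energy `w = v + pu²` grows at rate at least `2μδ` while `v ≤ v_c - δ`. A lower bound `|u| ≥ a`
therefore forces `w ≥ v_c + pa² - δ` after a fixed time, which in turn pushes `u` above
`a + θ(u_c - a)`; iterating contracts the gap `u_c - a` geometrically. Once `u ≥ u_c - γ` with
`pγ ≤ βε`, the term `2pu(pu - βv)` of `F₂ᴸ` is nonnegative while `v ≤ v_c - ε`, so `v` climbs to
`v_c - ε`. Every phase is the same barrier argument: a quantity whose derivative is at least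
`m > 0` whenever it lies below `L` passes `L` within time `(L - f₀)/m` and never drops back.
-/

section Barrier

variable {f f' : ℝ → ℝ} {s T L : ℝ}

theorem le_image_of_deriv_pos_at_level {t : ℝ} (hf : ContinuousOn f (Icc s T))
    (hf' : ∀ x ∈ Ico s T, HasDerivWithinAt f (f' x) (Ici x) x)
    (hlevel : ∀ x ∈ Ico s T, f x = L → 0 < f' x) (hs : L ≤ f s) (ht : t ∈ Icc s T) :
    L ≤ f t := by
  simpa using image_le_of_deriv_right_lt_deriv_boundary (B := fun _ => -L) (B' := fun _ => 0)
    hf.neg (fun x hx => (hf' x hx).neg) (neg_le_neg hs) (fun _ => hasDerivAt_const _ _)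
    (fun x hx hfx => neg_neg_of_pos (hlevel x hx (neg_inj.mp hfx))) ht

theorem le_image_of_le_deriv_below_level {m f₀ t : ℝ} (hm : 0 < m) (hf : ContinuousOn f (Icc s T))
    (hf' : ∀ x ∈ Ico s T, HasDerivWithinAt f (f' x) (Ici x) x)
    (hgrow : ∀ x ∈ Ico s T, f x ≤ L → m ≤ f' x) (hf₀ : f₀ ≤ f s) (ht : t ∈ Icc s T)
    (hlate : s + (L - f₀) / m ≤ t) : L ≤ f t := by
  by_cases hreach : ∃ r ∈ Icc s t, L ≤ f r
  · obtain ⟨r, hr, hLr⟩ := hreach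
    exact le_image_of_deriv_pos_at_level (hf.mono (Icc_subset_Icc_left hr.1))
      (fun x hx => hf' x ⟨hr.1.trans hx.1, hx.2⟩)
      (fun x hx hfx => hm.trans_le (hgrow x ⟨hr.1.trans hx.1, hx.2⟩ hfx.le)) hLr ⟨hr.2, ht.2⟩
  push Not at hreach
  have hlinear : f s + m * (t - s) ≤ f t := by
    have hB : ∀ x, HasDerivAt (fun x => -(f s + m * (x - s))) (-m) x := fun x =>
      ((((hasDerivAt_id x).sub_const s).const_mul m).const_add (f s)).neg.congr_deriv (by ring)
    have := image_le_of_deriv_right_le_deriv_boundary (a := s) (b := t)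
      (hf.mono (Icc_subset_Icc_right ht.2)).neg
      (fun x hx => (hf' x ⟨hx.1, hx.2.trans_le ht.2⟩).neg) (by simp)
      (fun x _ => (hB x).continuousAt.continuousWithinAt) (fun x _ => (hB x).hasDerivWithinAt)
      (fun x hx => neg_le_neg (hgrow x ⟨hx.1, hx.2.trans_le ht.2⟩
        (hreach x (Ico_subset_Icc_self hx)).le)) ⟨ht.1, le_rfl⟩
    simp only [Pi.neg_apply] at this
    linarith
  have : L - f₀ ≤ m * (t - s) := (div_le_iff₀' hm).mp (by linarith)
  linarith

end Barrier

theorem sub_pow_succ_mul_le_of_step {g : ℝ → ℝ} {c θ γ Δ T : ℝ} (N : ℕ) (hc : 0 ≤ c) (hθ0 : 0 ≤ θ)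
    (hθ1 : θ ≤ 1) (hΔ : 0 ≤ Δ) (hγ : γ ≤ (1 - θ) ^ N * c)
    (hstep : ∀ a s, 0 ≤ a → γ ≤ c - a → 0 ≤ s → (∀ t ∈ Icc s T, a ^ 2 ≤ g t ^ 2) →
      ∀ t ∈ Icc (s + Δ) T, a + θ * (c - a) ≤ g t) :
    ∀ t ∈ Icc ((N + 1) * Δ) T, c - (1 - θ) ^ (N + 1) * c ≤ g t := by
  have hnonneg (n : ℕ) : 0 ≤ c - (1 - θ) ^ n * c := by
    nlinarith [pow_le_one₀ (n := n) (by linarith : 0 ≤ 1 - θ) (by linarith)]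
  have hgap {n : ℕ} (hn : n ≤ N) : γ ≤ c - (c - (1 - θ) ^ n * c) := by
    nlinarith [pow_le_pow_of_le_one (by linarith : 0 ≤ 1 - θ) (by linarith) hn]
  have hnext (n : ℕ) :
      c - (1 - θ) ^ n * c + θ * (c - (c - (1 - θ) ^ n * c)) = c - (1 - θ) ^ (n + 1) * c := by
    ring
  have hsq : ∀ n ≤ N, ∀ t ∈ Icc (n * Δ) T, (c - (1 - θ) ^ n * c) ^ 2 ≤ g t ^ 2 := by
    intro n
    induction n with
    | zero => simp [sq_nonneg]
    | succ n ih =>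
      intro hn t ht
      have := hstep _ (n * Δ) (hnonneg n) (hgap (by omega)) (by positivity) (ih (by omega)) t
        ⟨by push_cast at ht; linarith [ht.1], ht.2⟩
      rw [hnext] at this
      exact pow_le_pow_left₀ (hnonneg _) this 2
  intro t ht
  have := hstep _ (N * Δ) (hnonneg N) (hgap le_rfl) (by positivity) (hsq N le_rfl) t
    ⟨by linarith [ht.1], ht.2⟩
  rwa [hnext] at this

noncomputable def vCrit (p β Λ : ℝ) : ℝ := p * uCrit p β Λ / β

section Constants

variable {p β Λ : ℝ}

theorem uCrit_eq (hp : 1 < p) : uCrit p β Λ = β * (p - 1) / (p - 1 + β * Λ) := by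
  rw [uCrit, one_add_div (by linarith), inv_div, mul_div_assoc]

theorem uCrit_pos (hp : 1 < p) (hβ : 0 < β) (hΛ : 0 ≤ Λ) : 0 < uCrit p β Λ := by
  rw [uCrit_eq hp]
  exact div_pos (mul_pos hβ (by linarith)) (by nlinarith)

theorem vCrit_pos (hp : 1 < p) (hβ : 0 < β) (hΛ : 0 ≤ Λ) : 0 < vCrit p β Λ := by
  have := uCrit_pos hp hβ hΛ
  rw [vCrit]; positivity

theorem mul_vCrit (hβ : β ≠ 0) : β * vCrit p β Λ = p * uCrit p β Λ := by
  rw [vCrit]; field_simp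

theorem sub_one_add_mul_vCrit (hp : 1 < p) (hβ : 0 < β) (hΛ : 0 ≤ Λ) :
    (p - 1 + β * Λ) * vCrit p β Λ = p * (p - 1) := by
  have : 0 < p - 1 + β * Λ := by nlinarith
  rw [vCrit, uCrit_eq hp]; field_simp

theorem F2L_eq (hp : 1 < p) (hβ : 0 < β) (hΛ : 0 ≤ Λ) (z : ℝ × ℝ) :
    F2L p β Λ z = 2 * (p - 1 + β * Λ) * (vCrit p β Λ - z.2) - 2 * p * z.1 * F1 p β z := by
  rw [F2L, F1]; linear_combination (-2) * sub_one_add_mul_vCrit (Λ := Λ) hp hβ hΛ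

end Constants

section Trajectory

variable {p β Λ T : ℝ} {U U' : ℝ → ℝ × ℝ}

theorem CondI.continuousOn (hU : CondI p β Λ T U U') : ContinuousOn U (Icc 0 T) :=
  fun x hx => (hU.1 x hx).continuousWithinAt

theorem CondI.hasDerivWithinAt_Ici (hU : CondI p β Λ T U U') {x : ℝ} (hx : x ∈ Ico 0 T) :
    HasDerivWithinAt U (U' x) (Ici x) x :=
  (hU.1 x (Ico_subset_Icc_self hx)).mono_of_mem_nhdsWithin
    (Filter.mem_of_superset (Icc_mem_nhdsGE hx.2) (Icc_subset_Icc_left hx.1))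

theorem CondI.hasDerivWithinAt_fst (hU : CondI p β Λ T U U') {x : ℝ} (hx : x ∈ Ico 0 T) :
    HasDerivWithinAt (fun r => (U r).1) (U' x).1 (Ici x) x :=
  (hU.hasDerivWithinAt_Ici hx).fst

theorem CondI.hasDerivWithinAt_snd (hU : CondI p β Λ T U U') {x : ℝ} (hx : x ∈ Ico 0 T) :
    HasDerivWithinAt (fun r => (U r).2) (U' x).2 (Ici x) x :=
  (hU.hasDerivWithinAt_Ici hx).snd

theorem CondI.deriv_energy_ge (hp : 1 < p) (hβ : 0 < β) (hΛ : 0 ≤ Λ)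
    (hU : CondI p β Λ T U U') {x : ℝ} (hx : x ∈ Icc 0 T) :
    2 * (p - 1 + β * Λ) * (vCrit p β Λ - (U x).2) ≤ (U' x).2 + p * (2 * (U x).1 * (U' x).1) := by
  have h := (hU.2.2.2 x hx).1
  rw [F2L_eq hp hβ hΛ, ← hU.2.2.1 x hx] at h
  linarith

theorem CondI.energy_ge_of_sq_ge (hp : 1 < p) (hβ : 0 < β) (hΛ : 0 ≤ Λ) (hU : CondI p β Λ T U U')
    (hv : ∀ x ∈ Icc 0 T, 0 ≤ (U x).2) {a δ s t : ℝ} (hδ : 0 < δ) (hs : 0 ≤ s)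
    (hsq : ∀ x ∈ Icc s T, a ^ 2 ≤ (U x).1 ^ 2) (ht : t ∈ Icc s T)
    (hlate : s + (vCrit p β Λ + p * a ^ 2) / (2 * (p - 1 + β * Λ) * δ) ≤ t) :
    vCrit p β Λ + p * a ^ 2 - δ ≤ (U t).2 + p * (U t).1 ^ 2 := by
  have hμ : 0 < p - 1 + β * Λ := by nlinarith
  have hsub : ∀ {x}, x ∈ Icc s T → x ∈ Icc 0 T := fun hx => ⟨hs.trans hx.1, hx.2⟩
  have hcont : ContinuousOn U (Icc s T) := hU.continuousOn.mono (Icc_subset_Icc_left hs)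
  refine le_image_of_le_deriv_below_level (f := fun x => (U x).2 + p * (U x).1 ^ 2)
    (f' := fun x => (U' x).2 + p * (2 * (U x).1 * (U' x).1)) (f₀ := 0)
    (m := 2 * (p - 1 + β * Λ) * δ) (by positivity)
    (hcont.snd.add (continuousOn_const.mul (hcont.fst.pow 2))) (fun x hx => ?_)
    (fun x hx hle => ?_) (by nlinarith [hv s (hsub ⟨le_rfl, ht.1.trans ht.2⟩)]) ht ?_
  · have hx' : x ∈ Ico 0 T := ⟨hs.trans hx.1, hx.2⟩
    exact ((hU.hasDerivWithinAt_snd hx').add ((hU.hasDerivWithinAt_fst hx').pow 2 |>.const_mul p)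
      ).congr_deriv (by simp)
  · have hx' := hsub (Ico_subset_Icc_self hx)
    have hv' : (U x).2 ≤ vCrit p β Λ - δ := by nlinarith [hsq x (Ico_subset_Icc_self hx)]
    nlinarith [hU.deriv_energy_ge hp hβ hΛ hx']
  · calc s + (vCrit p β Λ + p * a ^ 2 - δ - 0) / (2 * (p - 1 + β * Λ) * δ)
        ≤ s + (vCrit p β Λ + p * a ^ 2) / (2 * (p - 1 + β * Λ) * δ) := by gcongr; linarith
      _ ≤ t := hlate

theorem CondI.fst_ge_of_energy_ge (hp : 0 < p) (hβ : 0 < β) (hU : CondI p β Λ T U U')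
    (hv : ∀ x ∈ Icc 0 T, 0 ≤ (U x).2) {M c δ L s t : ℝ} (hM : ∀ x ∈ Icc 0 T, -M ≤ (U x).1)
    (hδ : 0 < δ) (hδL : δ ≤ L) (hrate : p * δ ≤ β * c - p * L - β * p * L ^ 2) (hs : 0 ≤ s)
    (henergy : ∀ x ∈ Icc s T, c ≤ (U x).2 + p * (U x).1 ^ 2) (ht : t ∈ Icc s T)
    (hlate : s + (L + M) / (p * δ) ≤ t) : L ≤ (U t).1 := by
  have hsub : ∀ {x}, x ∈ Icc s T → x ∈ Icc 0 T := fun hx => ⟨hs.trans hx.1, hx.2⟩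
  refine le_image_of_le_deriv_below_level (f := fun x => (U x).1) (f₀ := -M) (m := p * δ)
    (by positivity)
    (hU.continuousOn.mono (Icc_subset_Icc_left hs)).fst
    (fun x hx => hU.hasDerivWithinAt_fst ⟨hs.trans hx.1, hx.2⟩) (fun x hx hle => ?_)
    (hM s (hsub ⟨le_rfl, ht.1.trans ht.2⟩)) ht (by rwa [sub_neg_eq_add])
  have hx := Ico_subset_Icc_self hx
  have hvx := hv x (hsub hx)
  rw [hU.2.2.1 x (hsub hx), F1]
  rcases le_or_gt (U x).1 (-δ) with hneg | hpos
  · nlinarith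
  · have hsq : (U x).1 ^ 2 ≤ L ^ 2 := sq_le_sq' (by linarith) hle
    have hvc : c - p * (U x).1 ^ 2 ≤ (U x).2 := by linarith [henergy x hx]
    nlinarith [mul_le_mul_of_nonneg_left hvc hβ.le,
      mul_le_mul_of_nonneg_left hsq (mul_pos hβ hp).le, mul_le_mul_of_nonneg_left hle hp.le]

theorem CondI.snd_ge_of_fst_ge (hp : 1 < p) (hβ : 0 < β) (hΛ : 0 ≤ Λ) (hU : CondI p β Λ T U U')
    {γ ε s t : ℝ} (hε : 0 < ε) (hγ : γ ≤ uCrit p β Λ) (hγε : p * γ ≤ β * ε) (hs : 0 ≤ s)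
    (hv : ∀ x ∈ Icc 0 T, 0 ≤ (U x).2) (hu : ∀ x ∈ Icc s T, uCrit p β Λ - γ ≤ (U x).1)
    (ht : t ∈ Icc s T) (hlate : s + vCrit p β Λ / (2 * (p - 1 + β * Λ) * ε) ≤ t) :
    vCrit p β Λ - ε ≤ (U t).2 := by
  have hμ : 0 < p - 1 + β * Λ := by nlinarith
  have hsub : ∀ {x}, x ∈ Icc s T → x ∈ Icc 0 T := fun hx => ⟨hs.trans hx.1, hx.2⟩
  refine le_image_of_le_deriv_below_level (f := fun x => (U x).2) (f₀ := 0)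
    (m := 2 * (p - 1 + β * Λ) * ε) (by positivity)
    (hU.continuousOn.mono (Icc_subset_Icc_left hs)).snd
    (fun x hx => hU.hasDerivWithinAt_snd ⟨hs.trans hx.1, hx.2⟩) (fun x hx hle => ?_)
    (hv s (hsub ⟨le_rfl, ht.1.trans ht.2⟩)) ht (le_trans (by gcongr; linarith) hlate)
  have hx := Ico_subset_Icc_self hx
  have hF := (hU.2.2.2 x (hsub hx)).1
  rw [F2L_eq hp hβ hΛ, F1] at hF
  have hux := hu x hx
  have hcross : 0 ≤ p * (U x).1 - β * (U x).2 := by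
    nlinarith [mul_vCrit (p := p) (Λ := Λ) hβ.ne']
  nlinarith [mul_nonneg (mul_nonneg (by linarith : (0:ℝ) ≤ 2 * p) (by linarith : 0 ≤ (U x).1))
    hcross]

noncomputable def stepTime (p β Λ M δ : ℝ) : ℝ :=
  (vCrit p β Λ + p * uCrit p β Λ ^ 2) / (2 * (p - 1 + β * Λ) * δ) + (uCrit p β Λ + M) / (p * δ)

theorem CondI.fst_ge_of_sq_ge (hp : 1 < p) (hβ : 0 < β) (hΛ : 0 ≤ Λ) (hU : CondI p β Λ T U U')
    (hv : ∀ x ∈ Icc 0 T, 0 ≤ (U x).2) {M θ δ a s t : ℝ} (hM0 : 0 ≤ M)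
    (hM : ∀ x ∈ Icc 0 T, -M ≤ (U x).1)
    (hθ : θ * (1 + 2 * β * uCrit p β Λ) = 1 / 2) (hδ : 0 < δ) (ha : 0 ≤ a)
    (hδθ : δ ≤ θ * (uCrit p β Λ - a)) (hδp : (p + β) * δ ≤ p * (uCrit p β Λ - a) / 2)
    (hs : 0 ≤ s) (hsq : ∀ x ∈ Icc s T, a ^ 2 ≤ (U x).1 ^ 2)
    (ht : t ∈ Icc (s + stepTime p β Λ M δ) T) : a + θ * (uCrit p β Λ - a) ≤ (U t).1 := by
  set uc := uCrit p β Λ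
  have huc : 0 < uc := uCrit_pos hp hβ hΛ
  have hμ : 0 < p - 1 + β * Λ := by nlinarith
  have hβuc : 0 < β * uc := mul_pos hβ huc
  have hθ0 : 0 < θ := by nlinarith
  have hθ1 : θ ≤ 1 / 2 := by nlinarith
  have hgap : 0 < uc - a := pos_of_mul_pos_right (hδ.trans_le hδθ) hθ0.le
  have hvc := vCrit_pos hp hβ hΛ
  set s' := s + (vCrit p β Λ + p * uc ^ 2) / (2 * (p - 1 + β * Λ) * δ)
  have hss' : s ≤ s' := le_add_of_nonneg_right (by positivity)
  have henergy : ∀ x ∈ Icc s' T, vCrit p β Λ + p * a ^ 2 - δ ≤ (U x).2 + p * (U x).1 ^ 2 :=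
    fun x hx => hU.energy_ge_of_sq_ge hp hβ hΛ hv hδ hs hsq ⟨hss'.trans hx.1, hx.2⟩
      (le_trans (show _ ≤ s + _ by gcongr; nlinarith) hx.1)
  have hlate : s' + (uc + M) / (p * δ) ≤ t := by
    simpa only [s', stepTime, add_assoc] using ht.1
  set L := a + θ * (uc - a)
  -- from `u_c - L = (1 - θ)(u_c - a)`, `L² - a² = θ(u_c - a)(L + a)` and `θ(1 + 2βu_c) = 1/2`
  have hrate : p * uc - p * L - β * p * (L ^ 2 - a ^ 2)
      = p * (uc - a) / 2 + p * θ * β * (uc - a) * (2 * uc - L - a) := by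
    linear_combination (-(p * (uc - a))) * hθ
  refine hU.fst_ge_of_energy_ge (by linarith) hβ hv hM hδ (by nlinarith) ?_ (hs.trans hss')
    henergy ⟨le_trans (le_add_of_nonneg_right (by positivity)) hlate, ht.2⟩ ?_
  · have := mul_vCrit (p := p) (Λ := Λ) hβ.ne'
    nlinarith [mul_nonneg (mul_nonneg (mul_nonneg (by linarith : (0:ℝ) ≤ p) hθ0.le) hβ.le)
      (mul_nonneg hgap.le (by nlinarith : 0 ≤ 2 * uc - L - a))]
  · refine le_trans ?_ hlate
    gcongr
    nlinarith

theorem exists_forall_uCrit_sub_le (hp : 1 < p) (hβ : 0 < β) (hΛ : 0 ≤ Λ) {M γ : ℝ}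
    (hM0 : 0 ≤ M) (hγ : 0 < γ) :
    ∃ T₁ ≥ 0, ∀ T (U U' : ℝ → ℝ × ℝ), CondI p β Λ T U U' → (∀ x ∈ Icc 0 T, 0 ≤ (U x).2) →
      (∀ x ∈ Icc 0 T, -M ≤ (U x).1) → ∀ t ∈ Icc T₁ T, uCrit p β Λ - γ ≤ (U t).1 := by
  set uc := uCrit p β Λ
  have huc : 0 < uc := uCrit_pos hp hβ hΛ
  have hμ : 0 < p - 1 + β * Λ := by nlinarith
  have hvc := vCrit_pos hp hβ hΛ
  set θ := 1 / (2 * (1 + 2 * β * uc)) with hθ_def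
  have hθ : θ * (1 + 2 * β * uc) = 1 / 2 := by rw [hθ_def]; field_simp
  have hθ0 : 0 < θ := by positivity
  have hθ1 : θ < 1 := by nlinarith [mul_pos hβ huc]
  obtain ⟨N, hN⟩ := exists_pow_lt_of_lt_one (div_pos hγ huc) (by linarith : 1 - θ < 1)
  set γ' := (1 - θ) ^ N * uc
  have hγ' : 0 < γ' := mul_pos (pow_pos (by linarith) N) huc
  set δ := min (θ * γ') (p * γ' / (2 * (p + β)))
  have hδ : 0 < δ := lt_min (by positivity) (div_pos (by nlinarith) (by linarith))
  have hδθ : δ ≤ θ * γ' := min_le_left _ _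
  have hδp : (p + β) * δ ≤ p * γ' / 2 := by
    have := min_le_right (θ * γ') (p * γ' / (2 * (p + β)))
    rw [le_div_iff₀ (by linarith)] at this
    linarith
  have hΔ : 0 ≤ stepTime p β Λ M δ := by
    unfold stepTime; have : 0 < p := by linarith
    positivity
  refine ⟨(N + 1) * stepTime p β Λ M δ, by positivity, fun T U U' hU hv hM t ht => ?_⟩
  have hlim := sub_pow_succ_mul_le_of_step (g := fun x => (U x).1) N huc.le hθ0.le hθ1.le hΔ le_rfl
    (fun a s ha hgap hs hsq t ht => hU.fst_ge_of_sq_ge hp hβ hΛ hv hM0 hM hθ hδ ha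
      (hδθ.trans (mul_le_mul_of_nonneg_left hgap hθ0.le))
      (hδp.trans (by nlinarith [mul_le_mul_of_nonneg_left hgap (by linarith : (0 : ℝ) ≤ p)]))
      hs hsq ht) t ht
  have hpow : (1 - θ) ^ (N + 1) * uc ≤ γ' :=
    mul_le_mul_of_nonneg_right (pow_le_pow_of_le_one (by linarith) (by linarith) N.le_succ) huc.le
  have hγ'γ : γ' < γ := (lt_div_iff₀ huc).mp hN
  linarith

end Trajectory

theorem absorption_general
    (p β Λ : ℝ) (hp : 2 < p) (hβ : 0 < β) (hΛ : 0 < Λ)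
    (W : Set (ℝ × ℝ)) (hWc : IsCompact W)
    (hWpos : ∀ z ∈ W, 0 ≤ z.2)
    (ε : ℝ) (hε : 0 < ε) :
    ∃ T₀ > (0 : ℝ), ∀ T ≥ T₀, ∀ U U' : ℝ → ℝ × ℝ,
      CondI p β Λ T U U' → (∀ t ∈ Icc (0 : ℝ) T, U t ∈ W) →
      ∀ t ∈ Icc T₀ T,
        uCrit p β Λ - ε ≤ (U t).1 ∧ p * uCrit p β Λ / β - ε ≤ (U t).2 := by
  have hp1 : 1 < p := by linarith
  have hμ : 0 < p - 1 + β * Λ := by nlinarith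
  have hvc := vCrit_pos hp1 hβ hΛ.le
  obtain ⟨m, hm⟩ := (hWc.image continuous_fst).bddBelow
  set γ := min (min ε (β * ε / p)) (uCrit p β Λ)
  have hγε : γ ≤ ε := (min_le_left _ _).trans (min_le_left _ _)
  have hγp : p * γ ≤ β * ε :=
    (le_div_iff₀' (by linarith)).mp ((min_le_left _ _).trans (min_le_right _ _))
  have hγ : 0 < γ := lt_min (lt_min hε (by positivity)) (uCrit_pos hp1 hβ hΛ.le)
  obtain ⟨T₁, hT₁, hu⟩ := exists_forall_uCrit_sub_le hp1 hβ hΛ.le (le_max_right (-m) 0) hγ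
  refine ⟨T₁ + vCrit p β Λ / (2 * (p - 1 + β * Λ) * ε), by positivity,
    fun T hT U U' hU hW t ht => ?_⟩
  have hv : ∀ x ∈ Icc 0 T, 0 ≤ (U x).2 := fun x hx => hWpos _ (hW x hx)
  have hM : ∀ x ∈ Icc 0 T, -max (-m) 0 ≤ (U x).1 := fun x hx => by
    linarith [hm (mem_image_of_mem Prod.fst (hW x hx)), le_max_left (-m) 0]
  have hu' := hu T U U' hU hv hM
  have htT₁ : t ∈ Icc T₁ T := ⟨(le_add_of_nonneg_right (by positivity)).trans ht.1, ht.2⟩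
  exact ⟨by linarith [hu' t htT₁],
    hU.snd_ge_of_fst_ge hp1 hβ hΛ.le hε (min_le_right _ _) hγp hT₁ hv hu' htT₁ ht.1⟩

/-- **Absorption.** For every nonempty compact `W ⊂ ℝ × [0,∞)` and every `ε > 0` there
is a time `T₀` such that every trajectory satisfying Condition I that stays in `W`
satisfies `U₁(t) ≥ u_c − ε` and `U₂(t) ≥ p·u_c/β − ε` for all `t ∈ [T₀, T]`. -/
theorem absorption
    (p β Λ : ℝ) (hp : 2 < p) (hβ : 0 < β) (hΛ : 0 < Λ)
    (W : Set (ℝ × ℝ)) (hWc : IsCompact W) (hWne : W.Nonempty)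
    (hWpos : ∀ z ∈ W, 0 ≤ z.2)
    (ε : ℝ) (hε : 0 < ε) :
    ∃ T₀ > (0 : ℝ), ∀ T ≥ T₀, ∀ U U' : ℝ → ℝ × ℝ,
      CondI p β Λ T U U' → (∀ t ∈ Icc (0 : ℝ) T, U t ∈ W) →
      ∀ t ∈ Icc T₀ T,
        uCrit p β Λ - ε ≤ (U t).1 ∧ p * uCrit p β Λ / β - ε ≤ (U t).2 :=
  absorption_general p β Λ hp hβ hΛ W hWc hWpos ε hε
end
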